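/- Let X be a centered Gaussian random vector on ℝ^m with positive definite covariance matrix Σ, let A be a symmetric m × m real matrix, and let λ ∈ ℝ be such that the symmetric matrix I_m − 2λ·Σ^{1/2} A Σ^{1/2} is positive definite (in particular this holds for all λ ≤ 0 or for |λ| small enough). Then E[exp(λ·Xᵀ A X)] = det(I_m − 2λ·Σ^{1/2} A Σ^{1/2})^{−1/2}, where Σ^{1/2} is the positive semidefinite square root of Σ. -/

import Mathlib

/-!
Writing `X = Σ^{1/2} Z` with `Z` standard normal turns the expectation into
`∫ exp (λ zᵀ B z) dN(0, I)` with `B = Σ^{1/2} A Σ^{1/2}`. Against the standard normal density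
`(2π)^{-m/2} exp (-zᵀz / 2)` this is `(2π)^{-m/2} ∫ exp (-zᵀ M z / 2) dz` with `M = I - 2λB`.
Writing the positive definite `M` as `NᵀN`, the linear substitution `y = N z` evaluates the last
integral to `(2π)^{m/2} / |det N| = (2π)^{m/2} (det M)^{-1/2}`.
-/

open MeasureTheory ProbabilityTheory

noncomputable section

def Matrix.PosSemidef.sqrt {n : Type*} [Fintype n] [DecidableEq n] {A : Matrix n n ℝ}
    (hA : A.PosSemidef) : Matrix n n ℝ :=
  hA.1.eigenvectorUnitary.1 * Matrix.diagonal ((↑) ∘ (Real.sqrt ·) ∘ hA.1.eigenvalues) *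
    (star hA.1.eigenvectorUnitary : Matrix n n ℝ)

open Matrix Real
open scoped ENNReal NNReal MatrixOrder

theorem Matrix.PosSemidef.posSemidef_sqrt {n : Type*} [Fintype n] [DecidableEq n]
    {A : Matrix n n ℝ} (hA : A.PosSemidef) : hA.sqrt.PosSemidef := by
  rw [Matrix.PosSemidef.sqrt, star_eq_conjTranspose]
  exact (posSemidef_diagonal_iff.mpr fun _ => Real.sqrt_nonneg _).mul_mul_conjTranspose_same _

theorem Matrix.mulVec_dotProduct_mulVec_mulVec {ι R : Type*} [Fintype ι] [CommSemiring R]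
    (P C : Matrix ι ι R) (z : ι → R) :
    (P *ᵥ z) ⬝ᵥ (C *ᵥ (P *ᵥ z)) = z ⬝ᵥ ((Pᵀ * C * P) *ᵥ z) := by
  rw [← mulVec_mulVec, ← mulVec_mulVec, dotProduct_mulVec z, vecMul_transpose]

theorem MeasureTheory.lintegral_fin_nat_prod_eq_prod {n : ℕ} {α : Type*} [MeasurableSpace α]
    {μ : Fin n → Measure α} [∀ i, SigmaFinite (μ i)] {f : Fin n → α → ℝ≥0∞}
    (hf : ∀ i, Measurable (f i)) :
    ∫⁻ x, ∏ i, f i (x i) ∂Measure.pi μ = ∏ i, ∫⁻ x, f i x ∂μ i := by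
  induction n with
  | zero => simp
  | succ n ih =>
    rw [← (measurePreserving_piFinSuccAbove μ 0).symm.lintegral_comp_emb
      (MeasurableEquiv.measurableEmbedding _)]
    simp only [MeasurableEquiv.piFinSuccAbove_symm_apply, Fin.insertNthEquiv_apply,
      Fin.insertNth_zero, Fin.prod_univ_succ, Fin.cons_zero, Fin.cons_succ,
      Fin.zero_succAbove, cast_eq]
    have hg : Measurable fun y : Fin n → α => ∏ i, f i.succ (y i) :=
      Finset.measurable_prod _ fun i _ => (hf i.succ).comp (measurable_pi_apply i)
    rw [lintegral_prod_mul (hf 0).aemeasurable hg.aemeasurable, ih fun i => hf i.succ]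

theorem MeasureTheory.lintegral_fintype_prod_eq_prod {ι α : Type*} [Fintype ι]
    [MeasurableSpace α] {μ : ι → Measure α} [∀ i, SigmaFinite (μ i)] {f : ι → α → ℝ≥0∞}
    (hf : ∀ i, Measurable (f i)) :
    ∫⁻ x, ∏ i, f i (x i) ∂Measure.pi μ = ∏ i, ∫⁻ x, f i x ∂μ i := by
  let e := (Fintype.equivFin ι).symm
  rw [← (measurePreserving_piCongrLeft (α := fun _ => α) μ e).lintegral_comp_emb
    (MeasurableEquiv.measurableEmbedding _)]
  simp_rw [← e.prod_comp, MeasurableEquiv.coe_piCongrLeft, Equiv.piCongrLeft_apply_apply]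
  exact lintegral_fin_nat_prod_eq_prod fun i => hf (e i)

theorem MeasureTheory.Measure.pi_withDensity {ι α : Type*} [Fintype ι]
    [MeasurableSpace α] {μ : ι → Measure α} [∀ i, SigmaFinite (μ i)] {f : ι → α → ℝ≥0∞}
    [∀ i, SigmaFinite ((μ i).withDensity (f i))] (hf : ∀ i, Measurable (f i)) :
    Measure.pi (fun i => (μ i).withDensity (f i))
      = (Measure.pi μ).withDensity fun x => ∏ i, f i (x i) := by
  refine Measure.pi_eq fun s hs => ?_
  have hbox : ∀ x, (Set.univ.pi s).indicator (fun x => ∏ i, f i (x i)) x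
      = ∏ i, (s i).indicator (f i) (x i) := by
    intro x
    by_cases hx : x ∈ Set.univ.pi s
    · simp_all
    · obtain ⟨i, hi⟩ : ∃ i, x i ∉ s i := by simpa using hx
      rw [Set.indicator_of_notMem hx]
      exact (Finset.prod_eq_zero (Finset.mem_univ i) (Set.indicator_of_notMem hi _)).symm
  rw [withDensity_apply _ (MeasurableSet.univ_pi hs),
    ← lintegral_indicator (MeasurableSet.univ_pi hs)]
  simp_rw [hbox]
  rw [lintegral_fintype_prod_eq_prod fun i => (hf i).indicator (hs i)]
  simp_rw [lintegral_indicator (hs _), withDensity_apply _ (hs _)]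

theorem ProbabilityTheory.pi_gaussianReal_eq_withDensity {ι : Type*} [Fintype ι] (μ : ι → ℝ)
    (v : ι → ℝ≥0) (hv : ∀ i, v i ≠ 0) :
    Measure.pi (fun i => gaussianReal (μ i) (v i))
      = volume.withDensity fun x => ∏ i, gaussianPDF (μ i) (v i) (x i) := by
  have : ∀ i, SigmaFinite (volume.withDensity (gaussianPDF (μ i) (v i))) := fun i =>
    gaussianReal_of_var_ne_zero (μ i) (hv i) ▸ inferInstance
  simp_rw [gaussianReal_of_var_ne_zero _ (hv _)]
  rw [Measure.pi_withDensity fun i => measurable_gaussianPDF (μ i) (v i), volume_pi]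

theorem ProbabilityTheory.integral_pi_gaussianReal {ι E : Type*} [Fintype ι] [NormedAddCommGroup E]
    [NormedSpace ℝ E] (μ : ι → ℝ) (v : ι → ℝ≥0) (hv : ∀ i, v i ≠ 0) (f : (ι → ℝ) → E) :
    ∫ x, f x ∂Measure.pi (fun i => gaussianReal (μ i) (v i))
      = ∫ x, (∏ i, gaussianPDFReal (μ i) (v i) (x i)) • f x := by
  have hmeas : Measurable fun x : ι → ℝ => ∏ i, gaussianPDF (μ i) (v i) (x i) :=
    Finset.measurable_prod _ fun i _ => (measurable_gaussianPDF _ _).comp (measurable_pi_apply i)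
  rw [pi_gaussianReal_eq_withDensity μ v hv, integral_withDensity_eq_integral_toReal_smul hmeas
    (ae_of_all _ fun _ => ENNReal.prod_lt_top fun _ _ => gaussianPDF_lt_top)]
  simp_rw [ENNReal.toReal_prod, toReal_gaussianPDF]

theorem ProbabilityTheory.prod_gaussianPDFReal_zero_one {ι : Type*} [Fintype ι] (x : ι → ℝ) :
    ∏ i, gaussianPDFReal 0 1 (x i) = (√(2 * π))⁻¹ ^ Fintype.card ι * exp (-(1 / 2) * x ⬝ᵥ x) := by
  simp only [gaussianPDFReal, NNReal.coe_one, mul_one, sub_zero, Finset.prod_mul_distrib,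
    Finset.prod_const, Finset.card_univ, ← Real.exp_sum, dotProduct, Finset.mul_sum]
  congr 2
  exact Finset.sum_congr rfl fun i _ => by ring

theorem integral_exp_neg_half_dotProduct_self (ι : Type*) [Fintype ι] :
    ∫ x : ι → ℝ, exp (-(1 / 2) * x ⬝ᵥ x) = √(2 * π) ^ Fintype.card ι := by
  simp only [dotProduct, Finset.mul_sum, Real.exp_sum, ← sq]
  rw [integral_fintype_prod_volume_eq_pow (fun t : ℝ => exp (-(1 / 2) * t ^ 2)), integral_gaussian]
  norm_num [div_eq_mul_inv, mul_comm]

theorem integral_exp_neg_half_mulVec_dotProduct_mulVec {ι : Type*} [Fintype ι] [DecidableEq ι]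
    {N : Matrix ι ι ℝ} (hN : N.det ≠ 0) :
    ∫ x, exp (-(1 / 2) * (N *ᵥ x) ⬝ᵥ (N *ᵥ x)) = √(2 * π) ^ Fintype.card ι / |N.det| := by
  have hg : Continuous fun y : ι → ℝ => exp (-(1 / 2) * y ⬝ᵥ y) := by fun_prop
  have h := integral_map (μ := volume) (toLin' N).continuous_of_finiteDimensional.aemeasurable
    hg.aestronglyMeasurable
  rw [Real.map_matrix_volume_pi_eq_smul_volume_pi hN, integral_smul_measure,
    integral_exp_neg_half_dotProduct_self, ENNReal.toReal_ofReal (by positivity)] at h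
  simp only [toLin'_apply] at h
  rw [← h, smul_eq_mul, abs_inv, div_eq_inv_mul]

theorem Matrix.PosDef.integral_exp_neg_half_dotProduct_mulVec {ι : Type*} [Fintype ι]
    [DecidableEq ι] {M : Matrix ι ι ℝ} (hM : M.PosDef) :
    ∫ x, exp (-(1 / 2) * x ⬝ᵥ (M *ᵥ x)) = √(2 * π) ^ Fintype.card ι / √M.det := by
  obtain ⟨N, hN, rfl⟩ :=
    CStarAlgebra.isStrictlyPositive_iff_eq_star_mul_self.mp hM.isStrictlyPositive
  have hdet : (star N * N).det = N.det * N.det := by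
    rw [det_mul, star_eq_conjTranspose, det_conjTranspose, star_trivial]
  have hquad : ∀ x, x ⬝ᵥ ((star N * N) *ᵥ x) = (N *ᵥ x) ⬝ᵥ (N *ᵥ x) := fun x => by
    simpa [star_eq_conjTranspose] using (mulVec_dotProduct_mulVec_mulVec N 1 x).symm
  simp_rw [hquad, hdet, Real.sqrt_mul_self_eq_abs]
  exact integral_exp_neg_half_mulVec_dotProduct_mulVec ((isUnit_iff_isUnit_det N).mp hN).ne_zero

theorem ProbabilityTheory.integral_exp_mul_dotProduct_mulVec_pi_gaussianReal {ι : Type*}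
    [Fintype ι] [DecidableEq ι] {B : Matrix ι ι ℝ} {l : ℝ} (h : (1 - (2 * l) • B).PosDef) :
    ∫ x, exp (l * x ⬝ᵥ (B *ᵥ x)) ∂Measure.pi (fun _ : ι => gaussianReal 0 1)
      = (1 - (2 * l) • B).det ^ (-(1 : ℝ) / 2) := by
  have hdensity : ∀ x : ι → ℝ, (∏ i, gaussianPDFReal 0 1 (x i)) * exp (l * x ⬝ᵥ (B *ᵥ x))
      = (√(2 * π))⁻¹ ^ Fintype.card ι * exp (-(1 / 2) * x ⬝ᵥ ((1 - (2 * l) • B) *ᵥ x)) := by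
    intro x
    rw [prod_gaussianPDFReal_zero_one, mul_assoc, ← exp_add, sub_mulVec, one_mulVec,
      smul_mulVec, dotProduct_sub, dotProduct_smul, smul_eq_mul]
    ring_nf
  calc ∫ x, exp (l * x ⬝ᵥ (B *ᵥ x)) ∂Measure.pi (fun _ : ι => gaussianReal 0 1)
      = (√(2 * π))⁻¹ ^ Fintype.card ι * ∫ x, exp (-(1 / 2) * x ⬝ᵥ ((1 - (2 * l) • B) *ᵥ x)) := by
        simp_rw [integral_pi_gaussianReal (fun _ => 0) (fun _ => 1) (fun _ => one_ne_zero),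
          smul_eq_mul, hdensity, integral_const_mul]
    _ = (1 - (2 * l) • B).det ^ (-(1 : ℝ) / 2) := by
        rw [h.integral_exp_neg_half_dotProduct_mulVec, neg_div, rpow_neg h.det_pos.le,
          ← sqrt_eq_rpow, inv_pow, div_eq_mul_inv,
          inv_mul_cancel_left₀ (pow_ne_zero _ (by positivity))]

theorem stmt14_general (m : ℕ) (S : Matrix (Fin m) (Fin m) ℝ) (hS : S.PosDef)
    {Ω : Type*} [MeasureSpace Ω]
    (X : Ω → Fin m → ℝ) (hXmeas : Measurable X)
    (hX : Measure.map X ℙ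
      = Measure.map (fun z => (hS.posSemidef.sqrt).mulVec z)
          (Measure.pi fun _ : Fin m => gaussianReal 0 1))
    (A : Matrix (Fin m) (Fin m) ℝ) (l : ℝ)
    (hpos : (1 - (2 * l) • (hS.posSemidef.sqrt * A * hS.posSemidef.sqrt)).PosDef) :
    ∫ ω, Real.exp (l * dotProduct (X ω) (A.mulVec (X ω))) ∂ℙ
      = ((1 - (2 * l) • (hS.posSemidef.sqrt * A * hS.posSemidef.sqrt)).det)
          ^ (-(1 : ℝ) / 2) := by
  set Q := hS.posSemidef.sqrt
  have hQ : Qᵀ = Q := hS.posSemidef.posSemidef_sqrt.isHermitian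
  have hF : Continuous fun v => exp (l * v ⬝ᵥ (A *ᵥ v)) := by fun_prop
  rw [← integral_map hXmeas.aemeasurable hF.aestronglyMeasurable, hX,
    integral_map (by fun_prop : Continuous (Q *ᵥ ·)).aemeasurable hF.aestronglyMeasurable]
  simp_rw [mulVec_dotProduct_mulVec_mulVec, hQ]
  exact integral_exp_mul_dotProduct_mulVec_pi_gaussianReal hpos

/-- Laplace transform of a Gaussian quadratic form.
If `X ~ N(0, Σ)` on `ℝ^m` with `Σ` positive definite, `A` is symmetric and
`I − 2λ Σ^{1/2} A Σ^{1/2}` is positive definite, then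
`E[exp(λ XᵀAX)] = det(I − 2λ Σ^{1/2} A Σ^{1/2})^{−1/2}`. -/
theorem stmt14 (m : ℕ) (S : Matrix (Fin m) (Fin m) ℝ) (hS : S.PosDef)
    {Ω : Type*} [MeasureSpace Ω] [IsProbabilityMeasure (ℙ : Measure Ω)]
    (X : Ω → Fin m → ℝ) (hXmeas : Measurable X)
    (hX : Measure.map X ℙ
      = Measure.map (fun z => (hS.posSemidef.sqrt).mulVec z)
          (Measure.pi fun _ : Fin m => gaussianReal 0 1))
    (A : Matrix (Fin m) (Fin m) ℝ) (hA : A.IsSymm) (l : ℝ)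
    (hpos : (1 - (2 * l) • (hS.posSemidef.sqrt * A * hS.posSemidef.sqrt)).PosDef) :
    ∫ ω, Real.exp (l * dotProduct (X ω) (A.mulVec (X ω))) ∂ℙ
      = ((1 - (2 * l) • (hS.posSemidef.sqrt * A * hS.posSemidef.sqrt)).det)
          ^ (-(1 : ℝ) / 2) :=
  stmt14_general m S hS X hXmeas hX A l hpos

end
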